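/- Let A be a fixed N×N real matrix. The coefficients of the two-variable polynomial det(u − μA − λ·Id) in λ and μ pairwise Poisson-commute with respect to the Lie–Poisson bracket on gl(N)* (the Mishchenko–Fomenko shift-of-argument family). -/

import Mathlib

/-!
Write `M(λ, μ) = u - μA - λ` and expand its adjugate as `∑ B_{nm} λⁿ μᵐ`. By Jacobi's formula the
gradient of `I_{nm}` is `B_{nm}`, and the Lie–Poisson bracket of two functions with gradients
`X`, `Y` is `tr ([Y, X] u)`. Since `M` commutes with its adjugate, comparing coefficients of `μ`
gives the Lenard–Magri recursion `[u, B_{n,0}] = 0`, `[u, B_{n,k+1}] = [A, B_{n,k}]`. Invariance of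
the trace form then turns it into `tr ([B_{n'm'}, B_{n,m+1}] u) = tr ([B_{n',m'+1}, B_{nm}] u)`, and
shifting the index `m` down to `0` makes the bracket vanish.
-/

/-- The coordinate function `u^{ij}` on `gl(N,ℝ)*`. -/
noncomputable def u {N : ℕ} (i j : Fin N) : MvPolynomial (Fin N × Fin N) ℝ :=
  MvPolynomial.X (i, j)

/-- The Lie–Poisson bracket on polynomial functions on `gl(N,ℝ)*`. -/
noncomputable def pb {N : ℕ} (P Q : MvPolynomial (Fin N × Fin N) ℝ) :
    MvPolynomial (Fin N × Fin N) ℝ :=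
  ∑ i : Fin N, ∑ j : Fin N, ∑ k : Fin N, ∑ l : Fin N,
    MvPolynomial.pderiv (i, j) P * MvPolynomial.pderiv (k, l) Q *
      ((if j = k then u i l else 0) - (if l = i then u k j else 0))

/-- The matrix `u − μA − λ·Id` with entries in `(MvPolynomial)[λ][μ]`
(outer variable `μ = X`, inner variable `λ = C X`). -/
noncomputable def MFmat {N : ℕ} (A : Matrix (Fin N) (Fin N) ℝ) :
    Matrix (Fin N) (Fin N)
      (Polynomial (Polynomial (MvPolynomial (Fin N × Fin N) ℝ))) :=
  fun i j =>
    Polynomial.C (Polynomial.C (u i j)) -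
      Polynomial.X * Polynomial.C (Polynomial.C (MvPolynomial.C (A i j))) -
      Polynomial.C Polynomial.X * (if i = j then 1 else 0)

/-- `I^A_{nm}` : the coefficient of `λⁿ μᵐ` in `det(u − μA − λ)`. -/
noncomputable def IA {N : ℕ} (A : Matrix (Fin N) (Fin N) ℝ) (n m : ℕ) :
    MvPolynomial (Fin N × Fin N) ℝ :=
  (((MFmat A).det).coeff m).coeff n

open Polynomial Matrix

section CommRing

variable {n R : Type*} [Fintype n] [DecidableEq n] [CommRing R]

theorem Matrix.det_updateRow_eq_sum_adjugate (M : Matrix n n R) (i : n) (v : n → R) :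
    (M.updateRow i v).det = ∑ j, M.adjugate j i * v j := by
  rw [← cramer_transpose_apply, cramer_eq_adjugate_mulVec, ← adjugate_transpose]
  rfl

theorem Matrix.commute_adjugate (M : Matrix n n R) : Commute M M.adjugate := by
  rw [Commute, SemiconjBy, mul_adjugate, adjugate_mul]

theorem Matrix.sum_mul_mul_sub_ite_eq_trace (X Y U : Matrix n n R) :
    ∑ i, ∑ j, ∑ k, ∑ l, X j i * Y l k *
      ((if j = k then U i l else 0) - (if l = i then U k j else 0)) =
    trace (⁅Y, X⁆ * U) := by
  simp only [mul_sub, Finset.sum_sub_distrib, mul_ite, mul_zero, Finset.sum_ite_eq',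
    Finset.sum_ite_irrel, Finset.sum_ite_eq, Finset.sum_const_zero, Finset.mem_univ, if_true,
    Ring.lie_def, sub_apply, trace, diag, mul_apply, sub_mul, Finset.sum_mul]
  congr 1
  · refine (Finset.sum_congr rfl fun _ _ => Finset.sum_comm).trans ?_
    rw [Finset.sum_comm]
    exact Finset.sum_congr rfl fun _ _ => Finset.sum_congr rfl fun _ _ =>
      Finset.sum_congr rfl fun _ _ => by ring
  · rw [Finset.sum_comm]
    exact Finset.sum_congr rfl fun _ _ => Finset.sum_comm

theorem Matrix.trace_lie_mul_eq_zero_of_lenard {U A : Matrix n n R} {B B' : ℕ → Matrix n n R}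
    (hB₀ : ⁅U, B 0⁆ = 0) (hB : ∀ k, ⁅U, B (k + 1)⁆ = ⁅A, B k⁆)
    (hB' : ∀ k, ⁅U, B' (k + 1)⁆ = ⁅A, B' k⁆) (m m' : ℕ) :
    trace (⁅B' m', B m⁆ * U) = 0 := by
  induction m generalizing m' with
  | zero =>
    have h := congrArg (fun M => trace (B' m' * M)) hB₀
    simp only [Ring.lie_def, mul_sub, sub_mul, trace_sub, trace_zero, mul_zero,
      ← Matrix.mul_assoc] at h ⊢
    linear_combination -h + trace_mul_cycle (B' m') U (B 0)
  | succ m ih =>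
    rw [← ih (m' + 1)]
    have h := congrArg (fun M => trace (B' m' * M)) (hB m)
    have h' := congrArg (fun M => trace (B m * M)) (hB' m')
    simp only [Ring.lie_def, mul_sub, sub_mul, trace_sub, ← Matrix.mul_assoc] at h h' ⊢
    linear_combination -h - h' + trace_mul_cycle (B' m') U (B (m + 1))
      + trace_mul_cycle (B m) U (B' (m' + 1)) - trace_mul_cycle (B m) A (B' m')
      - trace_mul_cycle (B' m') A (B m)

noncomputable def Matrix.matPolyPolyEquiv : Matrix n n R[X][X] ≃+* (Matrix n n R)[X][X] :=
  (matPolyEquiv : Matrix n n R[X][X] ≃ₐ[R[X]] _).toRingEquiv.trans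
    (mapEquiv (matPolyEquiv : Matrix n n R[X] ≃ₐ[R] _).toRingEquiv)

@[simp]
theorem Matrix.coeff_coeff_matPolyPolyEquiv_apply (M : Matrix n n R[X][X]) (m k : ℕ) (i j : n) :
    ((matPolyPolyEquiv M).coeff m).coeff k i j = ((M i j).coeff m).coeff k := by
  simp [matPolyPolyEquiv, mapEquiv, coeff_map, matPolyEquiv_coeff_apply]

end CommRing

namespace Derivation

variable {R A M : Type*} [CommRing R] [CommRing A] [Algebra R A]

noncomputable def mapCoeffsSelf (d : Derivation R A A) : Derivation R A[X] A[X] :=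
  PolynomialModule.equivPolynomialSelf.compDer d.mapCoeffs

@[simp]
theorem coeff_mapCoeffsSelf (d : Derivation R A A) (p : A[X]) (i : ℕ) :
    (d.mapCoeffsSelf p).coeff i = d (p.coeff i) :=
  rfl

@[simp]
theorem mapCoeffsSelf_C (d : Derivation R A A) (a : A) : d.mapCoeffsSelf (C a) = C (d a) := by
  ext i
  simp [coeff_C, apply_ite d]

@[simp]
theorem mapCoeffsSelf_X (d : Derivation R A A) : d.mapCoeffsSelf (X : A[X]) = 0 := by
  ext i
  simp [coeff_X, apply_ite d]

theorem leibniz_prod [AddCommGroup M] [Module A M] [Module R M] (D : Derivation R A M)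
    {ι : Type*} [DecidableEq ι] (s : Finset ι) (f : ι → A) :
    D (∏ i ∈ s, f i) = ∑ i ∈ s, (∏ j ∈ s.erase i, f j) • D (f i) := by
  induction s using Finset.induction_on with
  | empty => simp
  | insert a s ha ih =>
    rw [Finset.prod_insert ha, D.leibniz, ih, Finset.sum_insert ha, Finset.erase_insert ha,
      Finset.smul_sum, add_comm]
    congr 1
    refine Finset.sum_congr rfl fun i hi => ?_
    rw [Finset.erase_insert_of_ne (ne_of_mem_of_not_mem hi ha).symm,
      Finset.prod_insert fun h => ha (Finset.mem_of_mem_erase h), mul_smul]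

variable {n : Type*} [Fintype n] [DecidableEq n]

theorem apply_det_eq_sum_det_updateRow (D : Derivation R A A) (M : Matrix n n A) :
    D M.det = ∑ i, (M.updateRow i fun j => D (M i j)).det := by
  simp only [det_apply, map_sum, Units.smul_def, map_zsmul, leibniz_prod, smul_eq_mul]
  rw [Finset.sum_comm]
  refine Finset.sum_congr rfl fun σ _ => ?_
  rw [← Finset.smul_sum]
  congr 1
  conv_rhs => rw [← Equiv.sum_comp σ]
  refine Finset.sum_congr rfl fun k _ => ?_
  rw [← Finset.mul_prod_erase _ _ (Finset.mem_univ k), updateRow_self, mul_comm]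
  congr 1
  refine Finset.prod_congr rfl fun l hl => ?_
  rw [updateRow_ne fun h => (Finset.ne_of_mem_erase hl) (σ.injective h)]

theorem apply_det (D : Derivation R A A) (M : Matrix n n A) :
    D M.det = ∑ i, ∑ j, M.adjugate j i * D (M i j) := by
  simp only [apply_det_eq_sum_det_updateRow, det_updateRow_eq_sum_adjugate]

end Derivation

namespace Polynomial

variable {S : Type*} [Ring S]

theorem lie_coeff_zero_eq_zero_of_commute {u a : S} {P : S[X]}
    (h : Commute (C u - X * C a) P) : ⁅u, P.coeff 0⁆ = 0 := by
  have h₀ := congrArg (coeff · 0) h.eq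
  simp only [sub_mul, mul_sub, coeff_sub, coeff_C_mul, coeff_mul_C, mul_assoc X, coeff_X_mul_zero,
    ← mul_assoc P X, coeff_mul_X_zero, zero_mul, sub_zero] at h₀
  rw [Ring.lie_def, h₀, sub_self]

theorem lie_coeff_succ_of_commute {u a : S} {P : S[X]}
    (h : Commute (C u - X * C a) P) (k : ℕ) : ⁅u, P.coeff (k + 1)⁆ = ⁅a, P.coeff k⁆ := by
  have hk := congrArg (coeff · (k + 1)) h.eq
  simp only [sub_mul, mul_sub, coeff_sub, coeff_C_mul, coeff_mul_C, mul_assoc X, coeff_X_mul,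
    ← mul_assoc P X, coeff_mul_X] at hk
  rw [Ring.lie_def, Ring.lie_def, sub_eq_sub_iff_sub_eq_sub.mp hk]

theorem coeff_lie_C (u : S) (y : S[X]) (n : ℕ) : ⁅C u, y⁆.coeff n = ⁅u, y.coeff n⁆ := by
  simp [Ring.lie_def, coeff_C_mul, coeff_mul_C]

theorem coeff_lie_C_sub_X (u : S) (y : S[X]) (n : ℕ) :
    ⁅C u - X, y⁆.coeff n = ⁅u, y.coeff n⁆ := by
  simp [Ring.lie_def, sub_mul, mul_sub, (commute_X y).eq, coeff_C_mul, coeff_mul_C]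

end Polynomial

section MishchenkoFomenko

variable {N : ℕ} (A : Matrix (Fin N) (Fin N) ℝ)

local notation "𝒪" => MvPolynomial (Fin N × Fin N) ℝ

local notation "𝐮" => (Matrix.of u : Matrix (Fin N) (Fin N) 𝒪)

local notation "𝐀" => (A.map MvPolynomial.C : Matrix (Fin N) (Fin N) 𝒪)

/-- The transposed Jacobian `(∂P/∂u^{ji})_{ij}`, so that `dP = tr (grad P * du)`. -/
noncomputable def grad (P : 𝒪) : Matrix (Fin N) (Fin N) 𝒪 :=
  Matrix.of fun i j => MvPolynomial.pderiv (j, i) P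

noncomputable def adjCoeff (n m : ℕ) : Matrix (Fin N) (Fin N) 𝒪 :=
  ((matPolyPolyEquiv (MFmat A).adjugate).coeff m).coeff n

theorem pb_eq_trace (P Q : 𝒪) : pb P Q = trace (⁅grad Q, grad P⁆ * 𝐮) :=
  sum_mul_mul_sub_ite_eq_trace _ _ _

theorem mapCoeffsSelf_pderiv_MFmat (v : Fin N × Fin N) (k l : Fin N) :
    (MvPolynomial.pderiv v).mapCoeffsSelf.mapCoeffsSelf (MFmat A k l) =
      if (k, l) = v then 1 else 0 := by
  simp [MFmat, u, MvPolynomial.pderiv_X, Pi.single_apply, apply_ite (Derivation.mapCoeffsSelf _)]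

theorem grad_IA (n m : ℕ) : grad (IA A n m) = adjCoeff A n m := by
  refine Matrix.ext fun i j => ?_
  have h : MvPolynomial.pderiv (j, i) (IA A n m) =
      (((MvPolynomial.pderiv (j, i)).mapCoeffsSelf.mapCoeffsSelf (MFmat A).det).coeff m).coeff n :=
    rfl
  rw [grad, of_apply, h, Derivation.apply_det]
  simp only [mapCoeffsSelf_pderiv_MFmat, Prod.mk.injEq, mul_ite, mul_one, mul_zero, ite_and,
    Finset.sum_ite_eq', Finset.sum_ite_irrel, Finset.sum_const_zero, Finset.mem_univ, if_true]
  rw [adjCoeff, coeff_coeff_matPolyPolyEquiv_apply]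

theorem matPolyPolyEquiv_MFmat : matPolyPolyEquiv (MFmat A) = C (C 𝐮 - X) - X * C (C 𝐀) := by
  refine Polynomial.ext fun m => Polynomial.ext fun k => Matrix.ext fun i j => ?_
  simp only [coeff_coeff_matPolyPolyEquiv_apply, MFmat]
  simp only [X_mul_C, mul_ite, mul_one, mul_zero, coeff_sub, coeff_C, coeff_C_mul, coeff_X,
    apply_ite (coeff · k), coeff_zero, map_sub, Matrix.sub_apply]
  split_ifs <;> simp_all [u, coeff_C, coeff_X, one_apply]

theorem commute_matPolyPolyEquiv_adjugate_MFmat :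
    Commute (C (C 𝐮 - X) - X * C (C 𝐀)) (matPolyPolyEquiv (MFmat A).adjugate) := by
  rw [← matPolyPolyEquiv_MFmat]
  exact (commute_adjugate _).map _

theorem lie_adjCoeff_zero (n : ℕ) : ⁅𝐮, adjCoeff A n 0⁆ = 0 := by
  rw [adjCoeff, ← coeff_lie_C_sub_X,
    lie_coeff_zero_eq_zero_of_commute (commute_matPolyPolyEquiv_adjugate_MFmat A), coeff_zero]

theorem lie_adjCoeff_succ (n k : ℕ) : ⁅𝐮, adjCoeff A n (k + 1)⁆ = ⁅𝐀, adjCoeff A n k⁆ := by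
  rw [adjCoeff, adjCoeff, ← coeff_lie_C_sub_X,
    lie_coeff_succ_of_commute (commute_matPolyPolyEquiv_adjugate_MFmat A), coeff_lie_C]

end MishchenkoFomenko

theorem mishchenko_fomenko_commute (N : ℕ) (A : Matrix (Fin N) (Fin N) ℝ)
    (n m n' m' : ℕ) : pb (IA A n m) (IA A n' m') = 0 := by
  rw [pb_eq_trace, grad_IA, grad_IA]
  exact trace_lie_mul_eq_zero_of_lenard (lie_adjCoeff_zero A n) (lie_adjCoeff_succ A n)
    (lie_adjCoeff_succ A n') m m'
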